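/- There exists a unique continuous function T : [0,1] → ℝ satisfying T(y) = y + T(2y)/2 for all y ∈ [0,1/2] and T(y) = (1−y) + T(2y−1)/2 for all y ∈ [1/2,1] (the Takagi function); moreover T(0) = T(1) = 0. -/

import Mathlib

/-- `T` satisfies the Takagi functional equations: `T(y) = y + T(2y)/2` on `[0, 1/2]`
and `T(y) = (1-y) + T(2y-1)/2` on `[1/2, 1]`. -/
def IsTakagi (T : C(Set.Icc (0 : ℝ) 1, ℝ)) : Prop :=
  (∀ (y : ℝ) (h1 : y ∈ Set.Icc (0 : ℝ) 1) (_ : y ≤ 1 / 2)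
      (h2 : 2 * y ∈ Set.Icc (0 : ℝ) 1),
    T ⟨y, h1⟩ = y + T ⟨2 * y, h2⟩ / 2) ∧
  (∀ (y : ℝ) (h1 : y ∈ Set.Icc (0 : ℝ) 1) (_ : 1 / 2 ≤ y)
      (h2 : 2 * y - 1 ∈ Set.Icc (0 : ℝ) 1),
    T ⟨y, h1⟩ = (1 - y) + T ⟨2 * y - 1, h2⟩ / 2)

open Set ContinuousMap
open scoped NNReal

namespace TakagiAux

noncomputable section

abbrev I01 : Set ℝ := Set.Icc (0:ℝ) 1

lemma mem0 : (0:ℝ) ∈ I01 := ⟨le_refl 0, zero_le_one⟩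
lemma mem1 : (1:ℝ) ∈ I01 := ⟨zero_le_one, le_refl 1⟩

/-- The closed subset of maps vanishing at the endpoints. -/
def S : Set C(I01, ℝ) := {T | T ⟨0, mem0⟩ = 0 ∧ T ⟨1, mem1⟩ = 0}

lemma isClosed_S : IsClosed S := by
  have h0 : IsClosed {T : C(I01, ℝ) | T ⟨0, mem0⟩ = 0} :=
    isClosed_eq (continuous_eval_const _) continuous_const
  have h1 : IsClosed {T : C(I01, ℝ) | T ⟨1, mem1⟩ = 0} :=
    isClosed_eq (continuous_eval_const _) continuous_const
  exact h0.inter h1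

instance : CompleteSpace S := isClosed_S.completeSpace_coe

instance : Nonempty S := ⟨⟨0, rfl, rfl⟩⟩

/-- Extension of T to ℝ. -/
def ext (T : C(I01, ℝ)) : ℝ → ℝ := Set.IccExtend zero_le_one T

lemma ext_cont (T : C(I01, ℝ)) : Continuous (ext T) := T.continuous.Icc_extend'

lemma ext_of_mem (T : C(I01, ℝ)) {x : ℝ} (hx : x ∈ I01) : ext T x = T ⟨x, hx⟩ :=
  Set.IccExtend_of_mem _ _ hx

/-- The raw Takagi operator on ℝ. -/
def phiFun (T : C(I01, ℝ)) (y : ℝ) : ℝ :=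
  if y ≤ 1/2 then y + ext T (2*y) / 2 else (1 - y) + ext T (2*y - 1) / 2

lemma phiFun_cont (T : C(I01, ℝ)) (hT : T ⟨0, mem0⟩ = 0) (hT1 : T ⟨1, mem1⟩ = 0) :
    Continuous (phiFun T) := by
  apply Continuous.if_le
  · exact continuous_id.add (((ext_cont T).comp (by continuity)).div_const 2)
  · exact (continuous_const.sub continuous_id).add
      (((ext_cont T).comp (by continuity)).div_const 2)
  · exact continuous_id
  · exact continuous_const
  · intro y hy
    have hy' : y = 1/2 := hy
    subst hy'
    have e1 : ext T (2 * (1/2 : ℝ)) = 0 := by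
      rw [show (2 * (1/2 : ℝ)) = 1 by norm_num, ext_of_mem T mem1, hT1]
    have e0 : ext T (2 * (1/2 : ℝ) - 1) = 0 := by
      rw [show (2 * (1/2 : ℝ) - 1) = 0 by norm_num, ext_of_mem T mem0, hT]
    rw [e1, e0]; norm_num

/-- The Takagi operator on S. -/
def Phi (T : S) : S := by
  refine ⟨⟨fun y => phiFun T.1 y, ?_⟩, ?_, ?_⟩
  · exact (phiFun_cont T.1 T.2.1 T.2.2).comp continuous_subtype_val
  · show phiFun T.1 0 = 0
    rw [phiFun, if_pos (by norm_num)]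
    rw [show (2 * (0:ℝ)) = 0 by ring, ext_of_mem T.1 mem0, T.2.1]; ring
  · show phiFun T.1 1 = 0
    rw [phiFun, if_neg (by norm_num)]
    rw [show (2 * (1:ℝ) - 1) = 1 by ring, ext_of_mem T.1 mem1, T.2.2]; ring

lemma dist_ext_le (T G : C(I01, ℝ)) (x : ℝ) : dist (ext T x) (ext G x) ≤ dist T G := by
  unfold ext Set.IccExtend
  exact ContinuousMap.dist_apply_le_dist _

lemma contracting : ContractingWith (1/2 : ℝ≥0) Phi := by
  constructor
  · rw [← NNReal.coe_lt_coe]; norm_num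
  · apply LipschitzWith.of_dist_le_mul
    intro T G
    rw [Subtype.dist_eq (Phi T) (Phi G), Subtype.dist_eq T G]
    have h2 : ((1/2 : ℝ≥0) : ℝ) * dist T.1 G.1 = dist T.1 G.1 / 2 := by
      push_cast; ring
    rw [h2]
    refine (ContinuousMap.dist_le (by positivity)).2 ?_
    intro y
    show dist (phiFun T.1 y) (phiFun G.1 y) ≤ dist T.1 G.1 / 2
    unfold phiFun
    split_ifs with h
    · rw [Real.dist_eq]
      have := dist_ext_le T.1 G.1 (2*y)
      rw [Real.dist_eq] at this
      rw [show (y:ℝ) + ext T.1 (2*y) / 2 - (y + ext G.1 (2*y) / 2)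
        = (ext T.1 (2*y) - ext G.1 (2*y)) / 2 by ring, abs_div]
      rw [show |(2:ℝ)| = 2 by norm_num]
      linarith
    · rw [Real.dist_eq]
      have := dist_ext_le T.1 G.1 (2*y - 1)
      rw [Real.dist_eq] at this
      rw [show (1 - (y:ℝ)) + ext T.1 (2*y-1) / 2 - ((1 - y) + ext G.1 (2*y-1) / 2)
        = (ext T.1 (2*y-1) - ext G.1 (2*y-1)) / 2 by ring, abs_div]
      rw [show |(2:ℝ)| = 2 by norm_num]
      linarith

end

end TakagiAux

open TakagiAux

namespace TakagiAux

lemma boundary_of_isTakagi (T : C(I01, ℝ)) (h : IsTakagi T) :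
    T ⟨0, mem0⟩ = 0 ∧ T ⟨1, mem1⟩ = 0 := by
  obtain ⟨hl, hr⟩ := h
  have m20 : (2 * (0:ℝ)) ∈ I01 := by norm_num [I01]
  have m21 : (2 * (1:ℝ) - 1) ∈ I01 := by norm_num [I01]
  have e0 := hl 0 mem0 (by norm_num) m20
  have e1 := hr 1 mem1 (by norm_num) m21
  have c0 : T ⟨2 * (0:ℝ), m20⟩ = T ⟨0, mem0⟩ := by congr 1; exact Subtype.ext (by norm_num)
  have c1 : T ⟨2 * (1:ℝ) - 1, m21⟩ = T ⟨1, mem1⟩ := by congr 1; exact Subtype.ext (by norm_num)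
  rw [c0] at e0; rw [c1] at e1
  constructor <;> linarith

lemma fixed_iff (T : S) : Phi T = T ↔ IsTakagi T.1 := by
  constructor
  · intro hfix
    have happ : ∀ y : I01, phiFun T.1 y = T.1 y := by
      intro y
      have := congrArg (fun (G : S) => G.1 y) hfix
      exact this
    constructor
    · intro y h1 hle h2
      have := happ ⟨y, h1⟩
      rw [phiFun, if_pos hle, ext_of_mem T.1 h2] at this
      exact this.symm
    · intro y h1 hge h2
      by_cases hle : y ≤ 1/2
      · -- y = 1/2
        have hy : y = 1/2 := le_antisymm hle hge
        subst hy
        have := happ ⟨1/2, h1⟩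
        rw [phiFun, if_pos le_rfl] at this
        have e1 : ext T.1 (2 * (1/2 : ℝ)) = 0 := by
          rw [show (2 * (1/2 : ℝ)) = 1 by norm_num, ext_of_mem T.1 mem1, T.2.2]
        rw [e1] at this
        have c : T.1 ⟨2 * (1/2 : ℝ) - 1, h2⟩ = 0 := by
          rw [show (⟨2 * (1/2:ℝ) - 1, h2⟩ : I01) = ⟨0, mem0⟩ from Subtype.ext (by norm_num)]
          exact T.2.1
        rw [c, ← this]; norm_num
      · have := happ ⟨y, h1⟩
        rw [phiFun, if_neg hle, ext_of_mem T.1 h2] at this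
        exact this.symm
  · intro h
    apply Subtype.ext
    ext y
    show phiFun T.1 y = T.1 y
    rcases le_or_gt (y : ℝ) (1/2) with hle | hgt
    · have h2 : (2 * (y:ℝ)) ∈ I01 := ⟨by have := y.2.1; linarith, by linarith⟩
      rw [phiFun, if_pos hle, ext_of_mem T.1 h2]
      exact (h.1 y y.2 hle h2).symm
    · have hge : (1/2 : ℝ) ≤ y := le_of_lt hgt
      have h2 : (2 * (y:ℝ) - 1) ∈ I01 := ⟨by linarith, by have := y.2.2; linarith⟩
      rw [phiFun, if_neg (not_le.mpr hgt), ext_of_mem T.1 h2]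
      exact (h.2 y y.2 hge h2).symm

end TakagiAux

/-- There exists a unique continuous function `T : [0,1] → ℝ` satisfying
`T(y) = y + T(2y)/2` for `y ∈ [0,1/2]` and `T(y) = (1-y) + T(2y-1)/2` for `y ∈ [1/2,1]`
(the Takagi function); moreover `T(0) = T(1) = 0`. -/
theorem takagi_existsUnique :
    (∃! T : C(Set.Icc (0 : ℝ) 1, ℝ), IsTakagi T) ∧
    (∀ T : C(Set.Icc (0 : ℝ) 1, ℝ), IsTakagi T →
      T ⟨0, Set.mem_Icc.mpr ⟨le_refl 0, zero_le_one⟩⟩ = 0 ∧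
      T ⟨1, Set.mem_Icc.mpr ⟨zero_le_one, le_refl 1⟩⟩ = 0) := by
  have hc := TakagiAux.contracting
  set F : S := hc.fixedPoint Phi with hF
  have hfix : Phi F = F := hc.fixedPoint_isFixedPt
  constructor
  · refine ⟨F.1, (fixed_iff F).1 hfix, ?_⟩
    intro T hT
    have hb := boundary_of_isTakagi T hT
    have hmem : T ∈ S := hb
    have : Phi ⟨T, hmem⟩ = ⟨T, hmem⟩ := (fixed_iff ⟨T, hmem⟩).2 hT
    have := hc.fixedPoint_unique this
    exact congrArg Subtype.val this
  · intro T hT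
    exact boundary_of_isTakagi T hT
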